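/- arXiv:2001.04710 — 8 statements merged into one kernel-verified Lean document; each statement's English description precedes it below -/
import Mathlib

section
/- Let G be a simple graph on n vertices with adjacency matrix A over ℝ, let w be a vertex of degree 1 and u its unique neighbour. Then the nullity of the adjacency matrix of the induced subgraph G - u - w equals the nullity of A. -/
/-!
Row `w` of `A` is `A w u • Pi.single u 1`, so every vector in the kernel of `A` vanishes at `u`.
Row `u` then determines its value at `w` from the other coordinates, and the remaining rows, whose
`u`- and `w`-entries no longer contribute, are exactly the kernel equations of the submatrix.
Hence restriction to `V ∖ {u, w}` is an isomorphism between the two kernels.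
-/

open scoped Classical
open Matrix

/-- Nullity of a real square matrix: dimension of its kernel. -/
noncomputable def nullity {m : Type*} [Fintype m] (A : Matrix m m ℝ) : ℕ :=
  Module.finrank ℝ (LinearMap.ker A.mulVecLin)

theorem Fintype.sum_eq_add_add_sum_subtype_ne_ne {α M : Type*} [Fintype α] [DecidableEq α]
    [AddCommMonoid M] (f : α → M) {a b : α} (hab : a ≠ b) :
    ∑ x, f x = f a + f b + ∑ x : {x // x ≠ a ∧ x ≠ b}, f x := by
  rw [← Finset.sum_add_sum_compl {a, b}, Finset.sum_pair hab,
    Finset.sum_subtype _ (p := fun x => x ≠ a ∧ x ≠ b) (fun x => by simp)]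

namespace Matrix

variable {K V : Type*} [Field K] [Fintype V] {A : Matrix V V K} {u w : V}

theorem apply_eq_zero_of_mulVec_eq_zero (hrow : ∀ v, v ≠ u → A w v = 0) (hAwu : A w u ≠ 0)
    {x : V → K} (hx : A *ᵥ x = 0) : x u = 0 := by
  have hw : (A *ᵥ x) w = A w u * x u :=
    Finset.sum_eq_single u (fun v _ hv => by simp [hrow v hv]) (by simp)
  simpa [hx, hAwu] using hw.symm

variable [DecidableEq V]

local notation "V₀" => {s : V // s ≠ u ∧ s ≠ w}

theorem mulVec_apply_eq_add_add_sum_subtype (hne : u ≠ w) (x : V → K) (v : V) :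
    (A *ᵥ x) v = A v u * x u + A v w * x w + ∑ s : V₀, A v s * x s :=
  Fintype.sum_eq_add_add_sum_subtype_ne_ne _ hne

theorem submatrix_mulVec_comp_val (hne : u ≠ w) (x : V → K) (s : V₀) :
    (A.submatrix (Subtype.val : V₀ → V) (Subtype.val : V₀ → V) *ᵥ (x ∘ Subtype.val)) s
      = (A *ᵥ x) s - A s u * x u - A s w * x w := by
  rw [mulVec_apply_eq_add_add_sum_subtype hne]
  simp only [mulVec_apply_eq_sum, submatrix_apply, Function.comp_apply]
  ring

theorem submatrix_mulVec_comp_val_eq_zero (hne : u ≠ w) (hrow : ∀ v, v ≠ u → A w v = 0)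
    (hcol : ∀ v, v ≠ u → A v w = 0) (hAwu : A w u ≠ 0) {x : V → K} (hx : A *ᵥ x = 0) :
    A.submatrix (Subtype.val : V₀ → V) (Subtype.val : V₀ → V) *ᵥ (x ∘ Subtype.val)
      = 0 := by
  ext s
  rw [submatrix_mulVec_comp_val hne, hx, apply_eq_zero_of_mulVec_eq_zero hrow hAwu hx,
    hcol s s.2.1]
  simp

theorem eq_zero_of_mulVec_eq_zero_of_comp_val_eq_zero (hne : u ≠ w)
    (hrow : ∀ v, v ≠ u → A w v = 0) (hAwu : A w u ≠ 0) (hAuw : A u w ≠ 0) {x : V → K}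
    (hx : A *ᵥ x = 0) (hS : (x ∘ Subtype.val : V₀ → K) = 0) :
    x = 0 := by
  have hxu : x u = 0 := apply_eq_zero_of_mulVec_eq_zero hrow hAwu hx
  have hxs (s : V₀) : x s = 0 := congrFun hS s
  have hxw : x w = 0 := by
    have hu := congrFun hx u
    simp only [mulVec_apply_eq_add_add_sum_subtype hne, hxu, hxs] at hu
    simpa [hAuw] using hu
  ext v
  by_cases hvu : v = u
  · rw [hvu, hxu]; rfl
  by_cases hvw : v = w
  · rw [hvw, hxw]; rfl
  · exact hxs ⟨v, hvu, hvw⟩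

theorem exists_mulVec_eq_zero_comp_val_eq (hne : u ≠ w) (hrow : ∀ v, v ≠ u → A w v = 0)
    (hcol : ∀ v, v ≠ u → A v w = 0) (hAuw : A u w ≠ 0) {y : V₀ → K}
    (hy : A.submatrix (Subtype.val : V₀ → V) (Subtype.val : V₀ → V) *ᵥ y = 0) :
    ∃ x : V → K, A *ᵥ x = 0 ∧ x ∘ Subtype.val = y := by
  -- `x u = 0`, and `x w` is chosen so that row `u` of `A *ᵥ x` vanishes
  set c : K := -(A u w)⁻¹ * ∑ s : V₀, A u s * y s with hc
  let x : V → K := fun v =>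
    if h : v ≠ u ∧ v ≠ w then y ⟨v, h⟩ else if v = w then c else 0
  have hxu : x u = 0 := by simp [x, hne]
  have hxw : x w = c := by simp [x]
  have hxs (s : V₀) : x s = y s := dif_pos s.2
  refine ⟨x, ?_, funext hxs⟩
  ext v
  rw [mulVec_apply_eq_add_add_sum_subtype hne, hxu, hxw]
  simp only [hxs, mul_zero, zero_add, Pi.zero_apply]
  by_cases hvu : v = u
  · rw [hvu, hc, ← mul_assoc, mul_neg, mul_inv_cancel₀ hAuw, neg_one_mul, neg_add_cancel]
  rw [hcol v hvu, zero_mul, zero_add]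
  by_cases hvw : v = w
  · exact Finset.sum_eq_zero fun s _ => by rw [hvw, hrow s s.2.1, zero_mul]
  · exact congrFun hy ⟨v, hvu, hvw⟩

theorem finrank_ker_submatrix_eq (hne : u ≠ w) (hrow : ∀ v, v ≠ u → A w v = 0)
    (hcol : ∀ v, v ≠ u → A v w = 0) (hAwu : A w u ≠ 0) (hAuw : A u w ≠ 0) :
    Module.finrank K (LinearMap.ker
        (A.submatrix (Subtype.val : V₀ → V) (Subtype.val : V₀ → V)).mulVecLin)
      = Module.finrank K (LinearMap.ker A.mulVecLin) := by
  let restrict : LinearMap.ker A.mulVecLin →ₗ[K]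
      LinearMap.ker (A.submatrix (Subtype.val : V₀ → V) (Subtype.val : V₀ → V)).mulVecLin :=
    (LinearMap.funLeft K K Subtype.val).restrict fun _ hx =>
      submatrix_mulVec_comp_val_eq_zero hne hrow hcol hAwu hx
  have injective : Function.Injective restrict := by
    refine (injective_iff_map_eq_zero restrict).2 fun x hx => Subtype.ext ?_
    exact eq_zero_of_mulVec_eq_zero_of_comp_val_eq_zero hne hrow hAwu hAuw x.2
      (congrArg Subtype.val hx)
  have surjective : Function.Surjective restrict := fun y => by
    obtain ⟨x, hx, hxy⟩ := exists_mulVec_eq_zero_comp_val_eq hne hrow hcol hAuw y.2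
    exact ⟨⟨x, hx⟩, Subtype.ext hxy⟩
  exact (LinearEquiv.ofBijective restrict ⟨injective, surjective⟩).finrank_eq.symm

end Matrix

/-- If `w` has degree 1 with unique neighbour `u`, then the nullity of the adjacency
matrix of the induced subgraph `G - u - w` equals the nullity of `A(G)`. -/
theorem stmt_0 {V : Type*} [Fintype V] [DecidableEq V] (G : SimpleGraph V)
    [DecidableRel G.Adj] (u w : V) (hw : G.neighborSet w = {u}) :
    nullity ((G.adjMatrix ℝ).submatrix
        (Subtype.val : {v : V // v ≠ u ∧ v ≠ w} → V) Subtype.val)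
      = nullity (G.adjMatrix ℝ) := by
  have hadj (v : V) : G.Adj w v ↔ v = u := Set.ext_iff.1 hw v
  have hrow (v : V) (hv : v ≠ u) : G.adjMatrix ℝ w v = 0 := by simp [hadj, hv]
  have hwu : G.Adj w u := (hadj u).2 rfl
  exact Matrix.finrank_ker_submatrix_eq hwu.ne.symm hrow
    (fun v hv => by rw [← G.transpose_adjMatrix, transpose_apply, hrow v hv])
    (by simp [hwu]) (by simp [hwu.symm])
end

section
/- Let G be a simple graph, w a vertex of degree 1 with unique neighbour u. Then for every vertex v of G - u - w, v is a core vertex of G - u - w if and only if v is a core vertex of G. (Equivalently: the restriction to V \ {u,w} gives a bijection between kernel vectors of A(G) and kernel vectors of A(G-u-w), preserving supports on the common vertices.) -/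
open scoped Classical
open Matrix

/-! A kernel vector `x` of `A(G)` has `x u = (A x) w = 0`, and the column of `w` is the indicator
of `u`; so no entry outside `V ∖ {u, w}` reaches the rows of `G - u - w`, and `x` restricts to a
kernel vector of `A(G - u - w)`. Conversely, a kernel vector of `A(G - u - w)` extended by `0` at
`u` becomes a kernel vector of `A(G)` once its value at `w` is chosen to cancel the row of `u`,
the only row that value enters. -/

theorem Matrix.submatrix_val_mulVec_apply {n R : Type*} [Fintype n] [NonUnitalNonAssocSemiring R]
    {p : n → Prop} [DecidablePred p] (M : Matrix n n R) (x : n → R) (i : Subtype p)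
    (h : ∀ j, ¬p j → M i j * x j = 0) :
    (M.submatrix Subtype.val Subtype.val *ᵥ fun j : Subtype p => x j) i = (M *ᵥ x) i := by
  simp only [mulVec, dotProduct, submatrix_apply]
  rw [← Fintype.sum_subtype_add_sum_subtype p, Fintype.sum_eq_zero (fun j : {j // ¬p j} => _)
    fun j => h j j.prop, add_zero]

namespace SimpleGraph

variable {V R : Type*} [Ring R] {G : SimpleGraph V} [DecidableRel G.Adj] {u w : V}

theorem adjMatrix_mulVec_apply_of_neighborSet_eq_singleton [Fintype V]
    (hw : G.neighborSet w = {u}) (x : V → R) : (G.adjMatrix R *ᵥ x) w = x u := by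
  simp [adjMatrix_mulVec_apply, neighborFinset_def, hw]

theorem adjMatrix_apply_of_neighborSet_eq_singleton (hw : G.neighborSet w = {u}) (i : V) :
    G.adjMatrix R i w = if i = u then 1 else 0 := by
  have : G.Adj i w ↔ i = u := by
    rw [adj_comm, ← mem_neighborSet, hw, Set.mem_singleton_iff]
  simp only [adjMatrix_apply, this]

variable [Fintype V] [DecidableEq V]

theorem mulVec_submatrix_eq_zero_of_mulVec_eq_zero (hw : G.neighborSet w = {u}) {x : V → R}
    (hx : G.adjMatrix R *ᵥ x = 0) :
    (G.adjMatrix R).submatrix (Subtype.val : {v : V // v ≠ u ∧ v ≠ w} → V) Subtype.val *ᵥ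
      (fun i : {v : V // v ≠ u ∧ v ≠ w} => x i) = 0 := by
  have hxu : x u = 0 := by
    rw [← adjMatrix_mulVec_apply_of_neighborSet_eq_singleton hw x, hx, Pi.zero_apply]
  funext i
  refine (submatrix_val_mulVec_apply _ x i fun j hj => ?_).trans (congrFun hx i)
  obtain rfl | rfl : j = u ∨ j = w := by tauto
  · rw [hxu, mul_zero]
  · rw [adjMatrix_apply_of_neighborSet_eq_singleton hw, if_neg i.prop.1, zero_mul]

theorem exists_mulVec_eq_zero_of_mulVec_submatrix_eq_zero (hw : G.neighborSet w = {u})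
    {y : {v : V // v ≠ u ∧ v ≠ w} → R}
    (hy : (G.adjMatrix R).submatrix (Subtype.val : {v : V // v ≠ u ∧ v ≠ w} → V) Subtype.val *ᵥ
      y = 0) :
    ∃ x : V → R, G.adjMatrix R *ᵥ x = 0 ∧ ∀ i : {v : V // v ≠ u ∧ v ≠ w}, x i = y i := by
  set x₀ : V → R := Function.extend Subtype.val y 0
  have hx₀ : ∀ i : {v : V // v ≠ u ∧ v ≠ w}, x₀ i = y i := Subtype.val_injective.extend_apply y 0
  have hx₀_off : ∀ j, ¬(j ≠ u ∧ j ≠ w) → x₀ j = 0 := fun j hj =>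
    Function.extend_apply' _ _ _ fun ⟨i, hi⟩ => hj (hi ▸ i.prop)
  refine ⟨x₀ - Pi.single w ((G.adjMatrix R *ᵥ x₀) u), ?_, fun i => ?_⟩
  · funext i
    rw [mulVec_sub, mulVec_single, Pi.sub_apply, Pi.smul_apply, col_apply,
      MulOpposite.smul_eq_mul_unop, MulOpposite.unop_op,
      adjMatrix_apply_of_neighborSet_eq_singleton hw, Pi.zero_apply]
    by_cases hiu : i = u
    · rw [if_pos hiu, hiu, one_mul, sub_self]
    by_cases hiw : i = w
    · rw [if_neg hiu, hiw, adjMatrix_mulVec_apply_of_neighborSet_eq_singleton hw,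
        hx₀_off u (by tauto), zero_mul, sub_zero]
    · rw [if_neg hiu, zero_mul, sub_zero,
        ← submatrix_val_mulVec_apply (p := fun v => v ≠ u ∧ v ≠ w) _ _ ⟨i, hiu, hiw⟩
          fun j hj => by rw [hx₀_off j hj, mul_zero]]
      simp only [hx₀]
      exact congrFun hy _
  · simp [hx₀, i.prop.2]

end SimpleGraph

/-- If `w` has degree 1 with unique neighbour `u`, then a vertex of `G - u - w` is a
core vertex of `G - u - w` iff it is a core vertex of `G`. -/
theorem stmt_1 {V : Type*} [Fintype V] [DecidableEq V] (G : SimpleGraph V)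
    [DecidableRel G.Adj] (u w : V) (hw : G.neighborSet w = {u}) :
    ∀ v : {v : V // v ≠ u ∧ v ≠ w},
      (∃ x : {v : V // v ≠ u ∧ v ≠ w} → ℝ,
          ((G.adjMatrix ℝ).submatrix
            (Subtype.val : {v : V // v ≠ u ∧ v ≠ w} → V) Subtype.val).mulVec x = 0
            ∧ x v ≠ 0)
        ↔ (∃ x : V → ℝ, (G.adjMatrix ℝ).mulVec x = 0 ∧ x v.val ≠ 0) := by
  intro v
  constructor
  · rintro ⟨y, hy, hyv⟩
    obtain ⟨x, hx, hxy⟩ := SimpleGraph.exists_mulVec_eq_zero_of_mulVec_submatrix_eq_zero hw hy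
    exact ⟨x, hx, hxy v ▸ hyv⟩
  · rintro ⟨x, hx, hxv⟩
    exact ⟨_, SimpleGraph.mulVec_submatrix_eq_zero_of_mulVec_eq_zero hw hx, hxv⟩
end

section
/- Every singular tree has independent core vertices: no two core vertices of a tree are adjacent. -/
/-!
If `ℓ` is a leaf of a forest with neighbour `p`, row `ℓ` of `A x = 0` reads `x p = 0`. Hence `p`
is not a core vertex, and deleting the edges at `p` keeps every kernel vector in the kernel of the
smaller forest while keeping every edge between core vertices; induct on the forest.
-/

open Matrix

namespace SimpleGraph

variable {V : Type*} {G : SimpleGraph V}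

/-- The first vertex of a longest path is a leaf. -/
theorem IsAcyclic.exists_leaf [Finite V] (hG : G.IsAcyclic) {a b : V} (hab : G.Adj a b) :
    ∃ ℓ p : V, ∀ w, G.Adj ℓ w ↔ w = p := by
  have : Nonempty V := ⟨a⟩
  obtain ⟨u, v, q, hq, hmax⟩ := Walk.exists_isPath_forall_isPath_length_le_length G
  have hnil : ¬q.Nil := by
    have := hmax a b _ (Path.singleton hab).2
    rw [← Walk.length_eq_zero_iff]
    simp only [Path.singleton_coe, Walk.length_cons, Walk.length_nil] at this
    omega
  refine ⟨u, q.snd, fun w =>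
    ⟨fun huw => hG.eq_snd_of_adj_start hq huw ?_, fun h => h ▸ q.adj_snd hnil⟩⟩
  by_contra hw
  have := hmax w v _ (hq.cons (h := huw.symm) hw)
  rw [Walk.length_cons] at this
  omega

variable [Fintype V] {R : Type*} [NonAssocSemiring R]

theorem adjMatrix_mulVec_apply_of_leaf [DecidableRel G.Adj] {ℓ p : V}
    (hℓ : ∀ w, G.Adj ℓ w ↔ w = p) (x : V → R) : (G.adjMatrix R *ᵥ x) ℓ = x p := by
  have : G.neighborFinset ℓ = {p} := by ext w; simp [hℓ]
  rw [adjMatrix_mulVec_apply, this, Finset.sum_singleton]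

theorem adjMatrix_deleteIncidenceSet_mulVec_eq_zero [DecidableEq V] [DecidableRel G.Adj]
    {p : V} {x : V → R} (hx : G.adjMatrix R *ᵥ x = 0) (hp : x p = 0) :
    (G.deleteIncidenceSet p).adjMatrix R *ᵥ x = 0 := by
  funext c
  have hterm : ∀ w, (G.deleteIncidenceSet p).adjMatrix R c w * x w =
      if c = p then 0 else G.adjMatrix R c w * x w := by
    intro w
    by_cases hwp : w = p <;> by_cases hcp : c = p <;>
      simp [adjMatrix_apply, deleteIncidenceSet_adj, hwp, hcp, hp]
  simp only [mulVec, dotProduct, hterm]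
  split_ifs
  · simp
  · exact congrFun hx c

theorem IsAcyclic.not_adj_of_mulVec_eq_zero [DecidableRel G.Adj] (hG : G.IsAcyclic)
    {x y : V → R} (hx : G.adjMatrix R *ᵥ x = 0) (hy : G.adjMatrix R *ᵥ y = 0) {a b : V}
    (ha : x a ≠ 0) (hb : y b ≠ 0) : ¬G.Adj a b := by
  classical
  revert ‹DecidableRel G.Adj› hG
  induction G using WellFoundedLT.induction with
  | ind G ih =>
  intro _ hG hx hy hab
  obtain ⟨ℓ, p, hℓ⟩ := hG.exists_leaf hab
  have hxp : x p = 0 := by rw [← adjMatrix_mulVec_apply_of_leaf hℓ x, hx, Pi.zero_apply]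
  have hyp : y p = 0 := by rw [← adjMatrix_mulVec_apply_of_leaf hℓ y, hy, Pi.zero_apply]
  have hlt : G.deleteIncidenceSet p < G :=
    lt_of_le_of_ne (G.deleteIncidenceSet_le p) fun h => by
      have := (hℓ p).2 rfl
      rw [← h, deleteIncidenceSet_adj] at this
      exact this.2.2 rfl
  exact ih _ hlt (hG.anti hlt.le) (adjMatrix_deleteIncidenceSet_mulVec_eq_zero hx hxp)
    (adjMatrix_deleteIncidenceSet_mulVec_eq_zero hy hyp)
    (deleteIncidenceSet_adj.2 ⟨hab, fun h => ha (h ▸ hxp), fun h => hb (h ▸ hyp)⟩)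

end SimpleGraph

theorem stmt_4_general {V : Type*} [Fintype V] (T : SimpleGraph V)
    [DecidableRel T.Adj] (hT : T.IsTree) :
    ∀ a b : V,
      (∃ x : V → ℝ, (T.adjMatrix ℝ).mulVec x = 0 ∧ x a ≠ 0) →
      (∃ x : V → ℝ, (T.adjMatrix ℝ).mulVec x = 0 ∧ x b ≠ 0) →
      ¬ T.Adj a b := by
  rintro a b ⟨x, hx, ha⟩ ⟨y, hy, hb⟩
  exact hT.isAcyclic.not_adj_of_mulVec_eq_zero hx hy ha hb

/-- A singular tree has independent core vertices: no two core vertices are adjacent. -/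
theorem stmt_4 {V : Type*} [Fintype V] [DecidableEq V] (T : SimpleGraph V)
    [DecidableRel T.Adj] (hT : T.IsTree)
    (hsing : ∃ x : V → ℝ, x ≠ 0 ∧ (T.adjMatrix ℝ).mulVec x = 0) :
    ∀ a b : V,
      (∃ x : V → ℝ, (T.adjMatrix ℝ).mulVec x = 0 ∧ x a ≠ 0) →
      (∃ x : V → ℝ, (T.adjMatrix ℝ).mulVec x = 0 ∧ x b ≠ 0) →
      ¬ T.Adj a b :=
  stmt_4_general T hT
end

section
/- Let G be a graph whose core vertex set CV is independent, with vertices labelled so that A = [[0, Q, 0],[Qᵀ, N, R],[0, Rᵀ, M]] in blocks indexed by CV, N(CV), and the remaining vertices. Then dim ker(Qᵀ) = dim ker(A). -/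
/-! Every kernel vector of `A` is supported on `CV`, so extension by zero identifies `ker A`
with the kernel of the `V × CV` column block of `A`. Because `CV` is independent and has no
neighbours among the remote vertices, the only nonzero rows of that block are indexed by
`N(CV)`, where they form `Qᵀ`. -/

open scoped Classical
open Matrix

variable {V : Type*} [Fintype V] [DecidableEq V]

/-- The set of core vertices of `G`: vertices in the support of some kernel vector. -/
def coreSet (G : SimpleGraph V) [DecidableRel G.Adj] : Set V :=
  {v | ∃ x : V → ℝ, (G.adjMatrix ℝ).mulVec x = 0 ∧ x v ≠ 0}

/-- The neighbours of core vertices (which are core-forbidden when `coreSet` is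
independent). -/
def nbhdSet (G : SimpleGraph V) [DecidableRel G.Adj] : Set V :=
  {v | v ∉ coreSet G ∧ ∃ u ∈ coreSet G, G.Adj u v}

/-- The remote core-forbidden vertices. -/
def remoteSet (G : SimpleGraph V) [DecidableRel G.Adj] : Set V :=
  {v | v ∉ coreSet G ∧ v ∉ nbhdSet G}

/-- The `CV × N(CV)` submatrix `Q` of the adjacency matrix. -/
noncomputable def Qmat (G : SimpleGraph V) [DecidableRel G.Adj] :
    Matrix (coreSet G) (nbhdSet G) ℝ :=
  Matrix.of fun i j => (G.adjMatrix ℝ) i.val j.val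

open Module

section KernelSupport

variable {R k l m n : Type*} [CommSemiring R] [Fintype k] [Fintype n]

theorem Matrix.mulVec_extend_zero (A : Matrix m n R) {e : k → n} (he : e.Injective)
    (y : k → R) : A *ᵥ Function.extend e y 0 = A.submatrix id e *ᵥ y := by
  ext i
  refine (Fintype.sum_of_injective e he _ _ (fun v hv => ?_) fun c => ?_).symm
  · rw [Function.extend_apply' _ _ _ hv, Pi.zero_apply, mul_zero]
  · rw [he.extend_apply]; rfl

theorem Matrix.ker_mulVecLin_eq_map_extendByZero (A : Matrix m n R) {e : k → n}
    (he : e.Injective) (hA : ∀ x, A *ᵥ x = 0 → ∀ v ∉ Set.range e, x v = 0) :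
    LinearMap.ker A.mulVecLin =
      (LinearMap.ker (A.submatrix id e).mulVecLin).map (Function.ExtendByZero.linearMap R e) := by
  ext x
  simp only [LinearMap.mem_ker, Submodule.mem_map, mulVecLin_apply]
  constructor
  · intro hx
    have hext : Function.extend e (x ∘ e) 0 = x := by
      ext v
      by_cases hv : v ∈ Set.range e
      · obtain ⟨c, rfl⟩ := hv
        exact he.extend_apply _ _ c
      · rw [Function.extend_apply' _ _ _ hv, hA x hx v hv, Pi.zero_apply]
    exact ⟨x ∘ e, by rw [← mulVec_extend_zero A he, hext, hx], hext⟩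
  · rintro ⟨y, hy, rfl⟩
    exact (mulVec_extend_zero A he y).trans hy

theorem Matrix.finrank_ker_mulVecLin_submatrix_of_ker_supported (A : Matrix m n R) {e : k → n}
    (he : e.Injective) (hA : ∀ x, A *ᵥ x = 0 → ∀ v ∉ Set.range e, x v = 0) :
    finrank R (LinearMap.ker (A.submatrix id e).mulVecLin) =
      finrank R (LinearMap.ker A.mulVecLin) := by
  have hinj : Function.Injective (Function.ExtendByZero.linearMap R e) := fun y z h =>
    (Function.extend_comp he y 0).symm.trans <|
      (congrArg (· ∘ e) h).trans (Function.extend_comp he z 0)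
  rw [ker_mulVecLin_eq_map_extendByZero A he hA]
  exact (Submodule.equivMapOfInjective _ hinj _).finrank_eq

theorem Matrix.ker_mulVecLin_submatrix_of_row_eq_zero (B : Matrix m n R) {e : l → m}
    (hB : ∀ i ∉ Set.range e, B i = 0) :
    LinearMap.ker (B.submatrix e id).mulVecLin = LinearMap.ker B.mulVecLin := by
  ext y
  simp only [LinearMap.mem_ker, mulVecLin_apply, funext_iff, Pi.zero_apply]
  refine ⟨fun hy i => ?_, fun hy j => hy (e j)⟩
  by_cases hi : i ∈ Set.range e
  · obtain ⟨j, rfl⟩ := hi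
    exact hy j
  · simp [mulVec, hB i hi]

end KernelSupport

section GraphBlocks

variable {W : Type*} [Fintype W] (G : SimpleGraph W) [DecidableRel G.Adj]

theorem transpose_Qmat_eq_submatrix :
    (Qmat G)ᵀ = ((G.adjMatrix ℝ).submatrix id ((↑) : coreSet G → W)).submatrix (↑) id := by
  ext j i
  exact (G.isSymm_adjMatrix.apply i.1 j.1).symm

theorem adjMatrix_submatrix_coreSet_row_eq_zero
    (hind : ∀ a b : W, a ∈ coreSet G → b ∈ coreSet G → ¬ G.Adj a b) {u : W}
    (hu : u ∉ nbhdSet G) : (G.adjMatrix ℝ).submatrix id ((↑) : coreSet G → W) u = 0 := by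
  ext c
  have hnadj : ¬ G.Adj u c := fun hadj => by
    by_cases hcore : u ∈ coreSet G
    · exact hind u c hcore c.2 hadj
    · exact hu ⟨hcore, c, c.2, hadj.symm⟩
  simp [hnadj]

end GraphBlocks

theorem stmt_5_general (G : SimpleGraph V) [DecidableRel G.Adj]
    (hind : ∀ a b : V, a ∈ coreSet G → b ∈ coreSet G → ¬ G.Adj a b) :
    Module.finrank ℝ (LinearMap.ker ((Qmat G)ᵀ).mulVecLin)
      = nullity (G.adjMatrix ℝ) := by
  have hsupp : ∀ x, G.adjMatrix ℝ *ᵥ x = 0 →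
      ∀ v ∉ Set.range ((↑) : coreSet G → V), x v = 0 := fun x hx v hv => by
    by_contra hxv
    exact hv ⟨⟨v, x, hx, hxv⟩, rfl⟩
  have hrows : ∀ u ∉ Set.range ((↑) : nbhdSet G → V),
      (G.adjMatrix ℝ).submatrix id ((↑) : coreSet G → V) u = 0 := fun u hu =>
    adjMatrix_submatrix_coreSet_row_eq_zero G hind fun hn => hu ⟨⟨u, hn⟩, rfl⟩
  rw [transpose_Qmat_eq_submatrix, ker_mulVecLin_submatrix_of_row_eq_zero _ hrows]
  exact finrank_ker_mulVecLin_submatrix_of_ker_supported _ Subtype.val_injective hsupp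

/-- For a singular graph with independent core vertices,
`dim ker Qᵀ = dim ker A`. -/
theorem stmt_5 (G : SimpleGraph V) [DecidableRel G.Adj]
    (hsing : ∃ x : V → ℝ, x ≠ 0 ∧ (G.adjMatrix ℝ).mulVec x = 0)
    (hind : ∀ a b : V, a ∈ coreSet G → b ∈ coreSet G → ¬ G.Adj a b) :
    Module.finrank ℝ (LinearMap.ker ((Qmat G)ᵀ).mulVecLin)
      = nullity (G.adjMatrix ℝ) :=
  stmt_5_general G hind
end

section
/- Let G be a singular graph with independent core vertices, A its adjacency matrix in core-labelled block form with submatrix Q (CV × N(CV)). Then η(G) = |CV| - rank(Q). -/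
/-!
Every kernel vector of `A` is supported on the core set `CV`, so extension by zero identifies
`ker A` with the kernel of the column block `A[V, CV]`. When `CV` is independent, the only
nonzero rows of that block are those indexed by `N(CV)`, and they form `Qᵀ`. Hence
`η(G) = dim ker Qᵀ = |CV| - rank Q` by rank–nullity.
-/

open scoped Classical
open Matrix

variable {V : Type*} [Fintype V] [DecidableEq V]

namespace Function

variable {n R : Type*} [Zero R] {s : Set n}

theorem extend_subtype_val_apply_of_notMem (y : s → R) {j : n} (hj : j ∉ s) :
    extend ((↑) : s → n) y 0 j = 0 :=
  extend_apply' _ _ _ fun ⟨k, hk⟩ => hj (hk ▸ k.2)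

theorem extend_subtype_val_restrict {x : n → R} (hx : ∀ j ∉ s, x j = 0) :
    extend ((↑) : s → n) (fun j => x j) 0 = x := by
  funext j
  by_cases hj : j ∈ s
  · exact Subtype.val_injective.extend_apply _ _ ⟨j, hj⟩
  · rw [extend_subtype_val_apply_of_notMem _ hj, hx j hj]

end Function

namespace Matrix

variable {m n R : Type*} [Fintype n]

theorem mulVec_eq_submatrix_mulVec_of_support_subset [NonUnitalNonAssocSemiring R]
    (A : Matrix m n R) {s : Set n} {x : n → R} (hx : ∀ j ∉ s, x j = 0) :
    A *ᵥ x = A.submatrix id ((↑) : s → n) *ᵥ fun j => x j := by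
  ext i
  have hout : ∑ j : {j // j ∉ s}, A i j * x j = 0 :=
    Finset.sum_eq_zero fun j _ => by rw [hx j j.2, mul_zero]
  rw [mulVec, dotProduct, ← Fintype.sum_subtype_add_sum_subtype (· ∈ s), hout, add_zero]
  rfl

theorem ker_mulVecLin_eq_map_extendByZero_s7 [CommSemiring R] (A : Matrix m n R) {s : Set n}
    (hs : ∀ x, A *ᵥ x = 0 → ∀ j ∉ s, x j = 0) :
    LinearMap.ker A.mulVecLin = (LinearMap.ker (A.submatrix id ((↑) : s → n)).mulVecLin).map
      (Function.ExtendByZero.linearMap R ((↑) : s → n)) := by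
  ext x
  simp only [LinearMap.mem_ker, Submodule.mem_map, mulVecLin_apply]
  constructor
  · intro hx
    refine ⟨fun j => x j, ?_, Function.extend_subtype_val_restrict (hs x hx)⟩
    rw [← mulVec_eq_submatrix_mulVec_of_support_subset A (hs x hx), hx]
  · rintro ⟨y, hy, rfl⟩
    change A *ᵥ Function.extend _ y 0 = 0
    rw [mulVec_eq_submatrix_mulVec_of_support_subset A
      fun j => Function.extend_subtype_val_apply_of_notMem y]
    simpa [Subtype.val_injective.extend_apply] using hy

theorem finrank_ker_mulVecLin_eq_of_support_subset [CommSemiring R] (A : Matrix m n R)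
    {s : Set n} (hs : ∀ x, A *ᵥ x = 0 → ∀ j ∉ s, x j = 0) :
    Module.finrank R (LinearMap.ker A.mulVecLin) =
      Module.finrank R (LinearMap.ker (A.submatrix id ((↑) : s → n)).mulVecLin) := by
  rw [ker_mulVecLin_eq_map_extendByZero_s7 A hs]
  exact (Submodule.equivMapOfInjective _
    (Function.extend_injective Subtype.val_injective (0 : n → R)) _).finrank_eq.symm

theorem ker_mulVecLin_submatrix_of_rows_eq_zero [CommSemiring R] (B : Matrix m n R)
    {t : Set m} (ht : ∀ i ∉ t, ∀ j, B i j = 0) :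
    LinearMap.ker (B.submatrix ((↑) : t → m) id).mulVecLin = LinearMap.ker B.mulVecLin := by
  ext y
  refine ⟨fun h => funext fun i => ?_, fun h => funext fun i => congrFun h i⟩
  by_cases hi : i ∈ t
  · exact congrFun h ⟨i, hi⟩
  · simp [mulVec, dotProduct, ht i hi]

theorem rank_add_finrank_ker_mulVecLin [Fintype m] {K : Type*} [Field K] (M : Matrix m n K) :
    M.rank + Module.finrank K (LinearMap.ker M.mulVecLin) = Fintype.card n := by
  rw [rank, LinearMap.finrank_range_add_finrank_ker, Module.finrank_fintype_fun_eq_card]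

end Matrix

section CoreVertices

variable {V : Type*} [Fintype V] (G : SimpleGraph V) [DecidableRel G.Adj]

theorem eq_zero_of_notMem_coreSet {x : V → ℝ} (hx : G.adjMatrix ℝ *ᵥ x = 0) {v : V}
    (hv : v ∉ coreSet G) : x v = 0 :=
  not_not.1 fun h => hv ⟨x, hx, h⟩

theorem adjMatrix_apply_coreSet_eq_zero_of_notMem_nbhdSet
    (hind : ∀ a b : V, a ∈ coreSet G → b ∈ coreSet G → ¬ G.Adj a b) {v : V}
    (hv : v ∉ nbhdSet G) (u : coreSet G) : G.adjMatrix ℝ v u = 0 := by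
  have hnadj : ¬ G.Adj v u := by
    by_cases hvc : v ∈ coreSet G
    · exact hind v u hvc u.2
    · exact fun h => hv ⟨hvc, u, u.2, h.symm⟩
  simp [SimpleGraph.adjMatrix_apply, hnadj]

theorem adjMatrix_submatrix_nbhdSet_coreSet :
    (G.adjMatrix ℝ).submatrix ((↑) : nbhdSet G → V) ((↑) : coreSet G → V) =
      (Qmat G)ᵀ := by
  ext i j
  simp [Qmat, SimpleGraph.adjMatrix_apply, G.adj_comm]

end CoreVertices

theorem stmt_7_general (G : SimpleGraph V) [DecidableRel G.Adj]
    (hind : ∀ a b : V, a ∈ coreSet G → b ∈ coreSet G → ¬ G.Adj a b) :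
    nullity (G.adjMatrix ℝ) = Fintype.card (coreSet G) - (Qmat G).rank := by
  set A := G.adjMatrix ℝ
  set B := A.submatrix id ((↑) : coreSet G → V)
  have hsupp : ∀ x, A *ᵥ x = 0 → ∀ v ∉ coreSet G, x v = 0 :=
    fun x hx v => eq_zero_of_notMem_coreSet G hx
  have hrows : ∀ v ∉ nbhdSet G, ∀ u, B v u = 0 :=
    fun v hv => adjMatrix_apply_coreSet_eq_zero_of_notMem_nbhdSet G hind hv
  have hnullity : nullity A = Module.finrank ℝ (LinearMap.ker (Qmat G)ᵀ.mulVecLin) := by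
    rw [nullity, finrank_ker_mulVecLin_eq_of_support_subset A hsupp,
      ← ker_mulVecLin_submatrix_of_rows_eq_zero B hrows, submatrix_submatrix,
      Function.id_comp, Function.comp_id, adjMatrix_submatrix_nbhdSet_coreSet]
  have hrank := rank_add_finrank_ker_mulVecLin (Qmat G)ᵀ
  rw [rank_transpose] at hrank
  omega

/-- For a singular graph with independent core vertices,
`η(G) = |CV| - rank Q`. -/
theorem stmt_7 (G : SimpleGraph V) [DecidableRel G.Adj]
    (hsing : ∃ x : V → ℝ, x ≠ 0 ∧ (G.adjMatrix ℝ).mulVec x = 0)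
    (hind : ∀ a b : V, a ∈ coreSet G → b ∈ coreSet G → ¬ G.Adj a b) :
    nullity (G.adjMatrix ℝ) = Fintype.card (coreSet G) - (Qmat G).rank :=
  stmt_7_general G hind
end

section
/- Let G be a singular core-labelled graph with CV × N(CV) biadjacency submatrix Q. The matrix Q has linearly independent columns if and only if η(G) = |CV| - |N(CV)|. -/
open scoped Classical
open Matrix

variable {V : Type*} [Fintype V] [DecidableEq V]

/-!
Since the core vertices are independent and every kernel vector of `A = A(G)` vanishes off `CV`,
a vector supported on `CV` lies in `ker A` exactly when its restriction to `CV` is killed by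
`Qᵀ`: the rows of `A` indexed by `CV` or by remote vertices vanish on `CV`, and those indexed by
`N(CV)` are the rows of `Qᵀ`. Hence `η(G) = dim ker Qᵀ = |CV| - rank Q`, while the columns of `Q`
are independent iff `rank Q = |N(CV)|`.
-/

namespace Matrix

variable {m n K : Type*} [Fintype n]

theorem mulVec_eq_submatrix_mulVec_of_support {R : Type*} [NonUnitalNonAssocSemiring R]
    (A : Matrix m n R) {p : n → Prop} [DecidablePred p] {x : n → R}
    (hx : ∀ j, ¬ p j → x j = 0) :
    A *ᵥ x = A.submatrix id (Subtype.val : Subtype p → n) *ᵥ fun j => x j := by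
  funext i
  simp only [mulVec, dotProduct, submatrix_apply, id]
  have hoff : ∑ j : {j // ¬ p j}, A i j * x j = 0 :=
    Fintype.sum_eq_zero _ fun j => by rw [hx j j.2, mul_zero]
  rw [← Fintype.sum_subtype_add_sum_subtype p, hoff, add_zero]

theorem linearIndependent_col_iff_rank_eq_card [Field K] (A : Matrix m n K) :
    LinearIndependent K A.col ↔ A.rank = Fintype.card n := by
  rw [linearIndependent_iff_card_eq_finrank_span, rank_eq_finrank_span_cols, eq_comm]
  rfl

end Matrix

section

variable {V : Type*} [Fintype V] (G : SimpleGraph V) [DecidableRel G.Adj]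

theorem not_adj_of_notMem_nbhdSet
    (hind : ∀ a b : V, a ∈ coreSet G → b ∈ coreSet G → ¬ G.Adj a b)
    {v u : V} (hv : v ∉ nbhdSet G) (hu : u ∈ coreSet G) : ¬ G.Adj v u := by
  by_cases hvc : v ∈ coreSet G
  · exact hind v u hvc hu
  · exact fun hvu => hv ⟨hvc, u, hu, hvu.symm⟩

theorem Qmat_transpose_mulVec_apply (y : coreSet G → ℝ) (j : nbhdSet G) :
    ((Qmat G)ᵀ *ᵥ y) j = ∑ i : coreSet G, G.adjMatrix ℝ j i * y i :=
  Finset.sum_congr rfl fun i _ => by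
    change G.adjMatrix ℝ i j * y i = _
    rw [G.isSymm_adjMatrix.apply]

theorem adjMatrix_mulVec_eq_zero_iff
    (hind : ∀ a b : V, a ∈ coreSet G → b ∈ coreSet G → ¬ G.Adj a b)
    {x : V → ℝ} (hx : ∀ v, v ∉ coreSet G → x v = 0) :
    G.adjMatrix ℝ *ᵥ x = 0 ↔ (Qmat G)ᵀ *ᵥ (fun i : coreSet G => x i) = 0 := by
  have hrow : ∀ v, (G.adjMatrix ℝ *ᵥ x) v = ∑ i : coreSet G, G.adjMatrix ℝ v i * x i := by
    intro v
    rw [mulVec_eq_submatrix_mulVec_of_support _ hx]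
    rfl
  constructor
  · intro h
    funext j
    rw [Qmat_transpose_mulVec_apply, ← hrow, h, Pi.zero_apply, Pi.zero_apply]
  · intro h
    funext v
    rw [hrow]
    by_cases hv : v ∈ nbhdSet G
    · simpa only [Qmat_transpose_mulVec_apply, Pi.zero_apply] using congrFun h ⟨v, hv⟩
    · exact Finset.sum_eq_zero fun i _ => by
        simp [not_adj_of_notMem_nbhdSet G hind hv i.2]

noncomputable def kerAdjMatrixEquivKerQmatTranspose
    (hind : ∀ a b : V, a ∈ coreSet G → b ∈ coreSet G → ¬ G.Adj a b) :
    LinearMap.ker (G.adjMatrix ℝ).mulVecLin ≃ₗ[ℝ] LinearMap.ker (Qmat G)ᵀ.mulVecLin where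
  toFun x := ⟨fun i => x.1 i,
    (adjMatrix_mulVec_eq_zero_iff G hind fun _ => eq_zero_of_notMem_coreSet G x.2).1 x.2⟩
  invFun y := ⟨Function.extend Subtype.val y.1 0, by
    have hsupp : ∀ v, v ∉ coreSet G → Function.extend Subtype.val y.1 0 v = 0 :=
      fun _ hv => Function.extend_val_apply' (j := (0 : V → ℝ)) hv
    refine (adjMatrix_mulVec_eq_zero_iff G hind hsupp).2 ?_
    simp only [Function.extend_val_apply (Subtype.prop _)]
    exact y.2⟩
  map_add' _ _ := rfl
  map_smul' _ _ := rfl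
  left_inv x := by
    ext v
    by_cases hv : v ∈ coreSet G
    · exact Function.extend_val_apply hv
    · exact (Function.extend_val_apply' hv).trans (eq_zero_of_notMem_coreSet G x.2 hv).symm
  right_inv y := by
    ext i
    exact Function.extend_val_apply i.2

end

theorem stmt_8_general (G : SimpleGraph V) [DecidableRel G.Adj]
    (hind : ∀ a b : V, a ∈ coreSet G → b ∈ coreSet G → ¬ G.Adj a b) :
    LinearIndependent ℝ (fun (j : nbhdSet G) => fun i => Qmat G i j)
      ↔ (nullity (G.adjMatrix ℝ) : ℤ)
          = (Fintype.card (coreSet G) : ℤ) - Fintype.card (nbhdSet G) := by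
  have hnullity :
      nullity (G.adjMatrix ℝ) = Module.finrank ℝ (LinearMap.ker (Qmat G)ᵀ.mulVecLin) :=
    (kerAdjMatrixEquivKerQmatTranspose G hind).finrank_eq
  have hrankNullity : (Qmat G)ᵀ.rank + Module.finrank ℝ (LinearMap.ker (Qmat G)ᵀ.mulVecLin)
      = Fintype.card (coreSet G) :=
    (LinearMap.finrank_range_add_finrank_ker _).trans (Module.finrank_fintype_fun_eq_card ℝ)
  rw [rank_transpose] at hrankNullity
  refine (linearIndependent_col_iff_rank_eq_card (Qmat G)).trans ?_
  rw [hnullity]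
  omega

/-- For a singular core-labelled graph, `Q` has linearly independent columns iff
`η(G) = |CV| - |N(CV)|`. -/
theorem stmt_8 (G : SimpleGraph V) [DecidableRel G.Adj]
    (hsing : ∃ x : V → ℝ, x ≠ 0 ∧ (G.adjMatrix ℝ).mulVec x = 0)
    (hind : ∀ a b : V, a ∈ coreSet G → b ∈ coreSet G → ¬ G.Adj a b) :
    LinearIndependent ℝ (fun (j : nbhdSet G) => fun i => Qmat G i j)
      ↔ (nullity (G.adjMatrix ℝ) : ℤ)
          = (Fintype.card (coreSet G) : ℤ) - Fintype.card (nbhdSet G) :=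
  stmt_8_general G hind
end

section
/- Let G be a bipartite graph of nullity 1 with partite sets V₁ and V₂ where |V₁| > |V₂|. Then n = |V₁|+|V₂| is odd, |V₂| = (n-1)/2, |V₁| = |V₂| + 1, and every core vertex of G lies in V₁. -/
/-!
Let `W` be the space of vectors vanishing on `V₂`; it has dimension `|V₁|`. For `x ∈ W` the
entries of `A x` on `V₁` vanish automatically, since every neighbour of a vertex of `V₁` lies in
`V₂`; so `A x = 0` imposes only the `|V₂|` conditions `(A x)|_{V₂} = 0`. Hence `ker A ∩ W` has
dimension at least `|V₁| - |V₂| ≥ 1`, and nullity one forces `|V₁| = |V₂| + 1` and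
`ker A ∩ W = ker A`: every kernel vector vanishes on `V₂`.
-/

open scoped Classical
open Matrix

namespace Submodule

variable {K M N : Type*} [DivisionRing K] [AddCommGroup M] [Module K M] [AddCommGroup N]
  [Module K N] [FiniteDimensional K M] [FiniteDimensional K N]

theorem finrank_le_finrank_inf_ker_add (W : Submodule K M) (g : M →ₗ[K] N) :
    Module.finrank K W ≤ Module.finrank K ↥(W ⊓ LinearMap.ker g) + Module.finrank K N := by
  have hsup := finrank_sup_add_finrank_inf_eq W (LinearMap.ker g)
  have hrank := LinearMap.finrank_range_add_finrank_ker g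
  have hle_M := (W ⊔ LinearMap.ker g).finrank_le
  have hle_N := (LinearMap.range g).finrank_le
  omega

end Submodule

section VanishingOn

variable (K : Type*) {V : Type*} [Field K]

def vanishingOn (s : Set V) : Submodule K (V → K) :=
  LinearMap.ker (LinearMap.funLeft K K ((↑) : s → V))

variable {K}

theorem mem_vanishingOn {s : Set V} {x : V → K} : x ∈ vanishingOn K s ↔ ∀ u ∈ s, x u = 0 := by
  simp [vanishingOn, funext_iff, LinearMap.funLeft_apply]

theorem finrank_vanishingOn_add_ncard [Fintype V] (s : Set V) :
    Module.finrank K (vanishingOn K s) + s.ncard = Fintype.card V := by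
  have hsurj := LinearMap.funLeft_surjective_of_injective K K ((↑) : s → V) Subtype.val_injective
  have h := LinearMap.finrank_range_add_finrank_ker (LinearMap.funLeft K K ((↑) : s → V))
  rw [LinearMap.range_eq_top_of_surjective _ hsurj, finrank_top, Module.finrank_fintype_fun_eq_card,
    Module.finrank_fintype_fun_eq_card, ← Nat.card_eq_fintype_card, Nat.card_coe_set_eq] at h
  exact (Nat.add_comm _ _).trans h

end VanishingOn

theorem SimpleGraph.adjMatrix_mulVec_apply_eq_zero {V R : Type*} [Fintype V]
    [NonAssocSemiring R] (G : SimpleGraph V) [DecidableRel G.Adj] {s : Set V} {x : V → R}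
    (hx : ∀ u ∈ s, x u = 0) {v : V} (hv : ∀ u, G.Adj v u → u ∈ s) :
    (G.adjMatrix R *ᵥ x) v = 0 := by
  rw [adjMatrix_mulVec_apply]
  exact Finset.sum_eq_zero fun u hu => hx u (hv u ((G.mem_neighborFinset v u).mp hu))

theorem stmt_11_general {V : Type*} [Fintype V] (G : SimpleGraph V)
    [DecidableRel G.Adj] (V₁ V₂ : Set V)
    (hdisj : Disjoint V₁ V₂) (hcover : V₁ ∪ V₂ = Set.univ)
    (hbip : ∀ a b : V, G.Adj a b → (a ∈ V₁ ∧ b ∈ V₂) ∨ (a ∈ V₂ ∧ b ∈ V₁))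
    (hnull : nullity (G.adjMatrix ℝ) = 1)
    (hgt : V₂.ncard < V₁.ncard) :
    Odd (Fintype.card V)
      ∧ V₂.ncard = (Fintype.card V - 1) / 2
      ∧ V₁.ncard = V₂.ncard + 1
      ∧ ∀ v : V, (∃ x : V → ℝ, (G.adjMatrix ℝ).mulVec x = 0 ∧ x v ≠ 0) → v ∈ V₁ := by
  set A := G.adjMatrix ℝ
  set W := vanishingOn ℝ V₂
  set L := W ⊓ W.comap A.mulVecLin
  have hmem : ∀ v, v ∈ V₁ ∨ v ∈ V₂ := Set.eq_univ_iff_forall.mp hcover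
  have hL_le : L ≤ LinearMap.ker A.mulVecLin := by
    rintro x ⟨hxW, hxA⟩
    replace hxW := mem_vanishingOn.mp hxW
    replace hxA := mem_vanishingOn.mp hxA
    refine funext fun v => (hmem v).elim (fun hv => ?_) (hxA v)
    refine G.adjMatrix_mulVec_apply_eq_zero hxW fun u huv => ?_
    exact ((hbip v u huv).resolve_right fun h => hdisj.ne_of_mem hv h.1 rfl).2
  have hL_rank : Module.finrank ℝ W ≤ Module.finrank ℝ L + V₂.ncard := by
    have h := W.finrank_le_finrank_inf_ker_add (LinearMap.funLeft ℝ ℝ ((↑) : V₂ → V) ∘ₗ A.mulVecLin)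
    rwa [LinearMap.ker_comp, Module.finrank_fintype_fun_eq_card, ← Nat.card_eq_fintype_card,
      Nat.card_coe_set_eq] at h
  have hW_rank : Module.finrank ℝ W + V₂.ncard = Fintype.card V :=
    finrank_vanishingOn_add_ncard V₂
  have hcard : V₁.ncard + V₂.ncard = Fintype.card V := by
    rw [← Set.ncard_union_eq hdisj, hcover, Set.ncard_univ, Nat.card_eq_fintype_card]
  have hL_le_one : Module.finrank ℝ L ≤ 1 := hnull ▸ Submodule.finrank_mono hL_le
  have hL_eq : L = LinearMap.ker A.mulVecLin :=
    Submodule.eq_of_le_of_finrank_eq hL_le (by rw [← nullity, hnull]; omega)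
  refine ⟨⟨V₂.ncard, by omega⟩, by omega, by omega, ?_⟩
  rintro v ⟨x, hx, hxv⟩
  have hxW : x ∈ W := (hL_eq.ge (LinearMap.mem_ker.mpr hx)).1
  exact (hmem v).resolve_right fun hv => hxv (mem_vanishingOn.mp hxW v hv)

/-- For a bipartite graph of nullity 1 with `|V₁| > |V₂|`: the number of vertices is
odd, `|V₂| = (n-1)/2`, `|V₁| = |V₂| + 1`, and every core vertex lies in `V₁`. -/
theorem stmt_11 {V : Type*} [Fintype V] [DecidableEq V] (G : SimpleGraph V)
    [DecidableRel G.Adj] (V₁ V₂ : Set V)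
    (hdisj : Disjoint V₁ V₂) (hcover : V₁ ∪ V₂ = Set.univ)
    (hbip : ∀ a b : V, G.Adj a b → (a ∈ V₁ ∧ b ∈ V₂) ∨ (a ∈ V₂ ∧ b ∈ V₁))
    (hnull : nullity (G.adjMatrix ℝ) = 1)
    (hgt : V₂.ncard < V₁.ncard) :
    Odd (Fintype.card V)
      ∧ V₂.ncard = (Fintype.card V - 1) / 2
      ∧ V₁.ncard = V₂.ncard + 1
      ∧ ∀ v : V, (∃ x : V → ℝ, (G.adjMatrix ℝ).mulVec x = 0 ∧ x v ≠ 0) → v ∈ V₁ :=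
  stmt_11_general G V₁ V₂ hdisj hcover hbip hnull hgt
end

section
/- In a connected bipartite graph of nullity 1, all core vertices lie in one partite set; in particular the core vertex set is independent. -/
open scoped Classical
open Matrix

/-!
Restricting a kernel vector of the adjacency matrix to one side of the bipartition gives
again a kernel vector, since `A` maps vectors supported on one side to vectors supported on
the other. If there were core vertices on both sides, restricting their witnesses to opposite
sides would give two nonzero kernel vectors with disjoint supports, hence linearly
independent, contradicting nullity `≤ 1`. Adjacent vertices lie on opposite sides, so the
core is then independent.
-/

theorem Submodule.eq_zero_or_eq_zero_of_disjoint_support {K ι : Type*} [Field K] [Finite ι]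
    {W : Submodule K (ι → K)} (hW : Module.finrank K W ≤ 1) {x y : ι → K} (hx : x ∈ W)
    (hy : y ∈ W) (hxy : Disjoint (Function.support x) (Function.support y)) :
    x = 0 ∨ y = 0 := by
  obtain ⟨v, hv⟩ := finrank_le_one_iff.mp hW
  obtain ⟨a, ha⟩ := hv ⟨x, hx⟩
  obtain ⟨b, hb⟩ := hv ⟨y, hy⟩
  replace ha : a • (v : ι → K) = x := congrArg Subtype.val ha
  replace hb : b • (v : ι → K) = y := congrArg Subtype.val hb
  refine or_iff_not_imp_left.mpr fun hx0 => ?_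
  obtain ⟨p, hp⟩ := Function.ne_iff.mp hx0
  have hyp : y p = 0 := Function.notMem_support.mp (hxy.notMem_of_mem_left hp)
  rw [← ha, Pi.smul_apply, smul_eq_mul] at hp
  rw [← hb, Pi.smul_apply, smul_eq_mul] at hyp
  rw [← hb, (mul_eq_zero.mp hyp).resolve_right (right_ne_zero_of_mul hp), zero_smul]

namespace SimpleGraph

variable {V : Type*} [Fintype V] (G : SimpleGraph V) [DecidableRel G.Adj]

theorem adjMatrix_mulVec_indicator {R : Type*} [NonAssocSemiring R] {S : Set V}
    (hS : ∀ a b, G.Adj a b → (a ∈ S ↔ b ∉ S)) (x : V → R) :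
    G.adjMatrix R *ᵥ S.indicator x = Sᶜ.indicator (G.adjMatrix R *ᵥ x) := by
  funext v
  rw [adjMatrix_mulVec_apply]
  by_cases hv : v ∈ S
  · rw [Set.indicator_of_notMem (Set.notMem_compl_iff.mpr hv)]
    refine Finset.sum_eq_zero fun u hu => Set.indicator_of_notMem ?_ x
    exact (hS v u ((mem_neighborFinset G v u).mp hu)).mp hv
  · rw [Set.indicator_of_mem (Set.mem_compl hv), adjMatrix_mulVec_apply]
    refine Finset.sum_congr rfl fun u hu => Set.indicator_of_mem ?_ x
    exact not_not.mp (mt (hS v u ((mem_neighborFinset G v u).mp hu)).mpr hv)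

def IsCoreVertex (v : V) : Prop :=
  ∃ x : V → ℝ, G.adjMatrix ℝ *ᵥ x = 0 ∧ x v ≠ 0

theorem indicator_mem_ker_adjMatrix {S : Set V} (hS : ∀ a b, G.Adj a b → (a ∈ S ↔ b ∉ S))
    {x : V → ℝ} (hx : G.adjMatrix ℝ *ᵥ x = 0) :
    S.indicator x ∈ LinearMap.ker (G.adjMatrix ℝ).mulVecLin := by
  rw [LinearMap.mem_ker, mulVecLin_apply, G.adjMatrix_mulVec_indicator hS, hx,
    Set.indicator_zero']

theorem isCoreVertex_subset_or_subset_compl {S : Set V}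
    (hS : ∀ a b, G.Adj a b → (a ∈ S ↔ b ∉ S)) (hnull : nullity (G.adjMatrix ℝ) ≤ 1) :
    (∀ v, G.IsCoreVertex v → v ∈ S) ∨ (∀ v, G.IsCoreVertex v → v ∉ S) := by
  by_contra! ⟨⟨a, ⟨x, hx, hxa⟩, haS⟩, ⟨b, ⟨y, hy, hyb⟩, hbS⟩⟩
  have hSc : ∀ a b, G.Adj a b → (a ∈ Sᶜ ↔ b ∉ Sᶜ) := fun a b hab => by
    simpa only [Set.mem_compl_iff, not_not, not_iff_comm] using (hS a b hab).symm
  have hdisj : Disjoint (Function.support (Sᶜ.indicator x)) (Function.support (S.indicator y)) :=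
    disjoint_compl_left.mono Set.support_indicator_subset Set.support_indicator_subset
  rcases Submodule.eq_zero_or_eq_zero_of_disjoint_support hnull
    (G.indicator_mem_ker_adjMatrix hSc hx) (G.indicator_mem_ker_adjMatrix hS hy) hdisj with h | h
  · exact hxa (by simpa [haS] using congrFun h a)
  · exact hyb (by simpa [hbS] using congrFun h b)

end SimpleGraph

theorem stmt_12_general {V : Type*} [Fintype V] (G : SimpleGraph V)
    [DecidableRel G.Adj] (V₁ V₂ : Set V)
    (hdisj : Disjoint V₁ V₂) (hcover : V₁ ∪ V₂ = Set.univ)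
    (hbip : ∀ a b : V, G.Adj a b → (a ∈ V₁ ∧ b ∈ V₂) ∨ (a ∈ V₂ ∧ b ∈ V₁))
    (hnull : nullity (G.adjMatrix ℝ) = 1) :
    ((∀ v : V, (∃ x : V → ℝ, (G.adjMatrix ℝ).mulVec x = 0 ∧ x v ≠ 0) → v ∈ V₁)
        ∨ (∀ v : V, (∃ x : V → ℝ, (G.adjMatrix ℝ).mulVec x = 0 ∧ x v ≠ 0) → v ∈ V₂))
      ∧ ∀ a b : V,
          (∃ x : V → ℝ, (G.adjMatrix ℝ).mulVec x = 0 ∧ x a ≠ 0) →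
          (∃ x : V → ℝ, (G.adjMatrix ℝ).mulVec x = 0 ∧ x b ≠ 0) →
          ¬ G.Adj a b := by
  obtain rfl : V₂ = V₁ᶜ := (IsCompl.of_eq hdisj.eq_bot (Set.top_eq_univ ▸ hcover)).symm.eq_compl
  have hS : ∀ a b, G.Adj a b → (a ∈ V₁ ↔ b ∉ V₁) := fun a b hab => by
    rcases hbip a b hab with ⟨ha, hb⟩ | ⟨ha, hb⟩ <;> simp_all
  have hcore := G.isCoreVertex_subset_or_subset_compl hS hnull.le
  refine ⟨hcore, fun a b ha hb hab => ?_⟩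
  rcases hcore with h | h
  · exact (hS a b hab).mp (h a ha) (h b hb)
  · exact h b hb ((hS a b hab).not_left.mp (h a ha))

/-- In a connected bipartite graph of nullity 1, all core vertices lie in one partite
set; in particular the core vertex set is independent. -/
theorem stmt_12 {V : Type*} [Fintype V] [DecidableEq V] (G : SimpleGraph V)
    [DecidableRel G.Adj] (V₁ V₂ : Set V)
    (hconn : G.Connected)
    (hdisj : Disjoint V₁ V₂) (hcover : V₁ ∪ V₂ = Set.univ)
    (hbip : ∀ a b : V, G.Adj a b → (a ∈ V₁ ∧ b ∈ V₂) ∨ (a ∈ V₂ ∧ b ∈ V₁))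
    (hnull : nullity (G.adjMatrix ℝ) = 1) :
    ((∀ v : V, (∃ x : V → ℝ, (G.adjMatrix ℝ).mulVec x = 0 ∧ x v ≠ 0) → v ∈ V₁)
        ∨ (∀ v : V, (∃ x : V → ℝ, (G.adjMatrix ℝ).mulVec x = 0 ∧ x v ≠ 0) → v ∈ V₂))
      ∧ ∀ a b : V,
          (∃ x : V → ℝ, (G.adjMatrix ℝ).mulVec x = 0 ∧ x a ≠ 0) →
          (∃ x : V → ℝ, (G.adjMatrix ℝ).mulVec x = 0 ∧ x b ≠ 0) →
          ¬ G.Adj a b :=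
  stmt_12_general G V₁ V₂ hdisj hcover hbip hnull
end
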